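/- arXiv:1709.04828 — 3 statements merged into one kernel-verified Lean document; each statement's English description precedes it below -/
import Mathlib

section
/- Let p be a prime, A a finite abelian p-group, and F a proper family of subgroups of A. Then min{ rk_p(Â/C) : C ≤ Â such that for every A' ∈ F one has Ann(A') ⊄ C } = min{ rk_p(B) : B ≤ A with B ∉ F }, and the right-hand side is by definition the p-corank cork_p(F). (Both minima are over nonempty sets: the trivial subgroup C qualifies on the left since A ∉ F.) -/
/-- The p-rank of an abelian (multiplicative) group `B`:
the dimension of the `𝔽_p`-vector space `B ⊗_ℤ 𝔽_p`. -/
noncomputable def pRank (p : ℕ) (B : Type) [CommGroup B] : ℕ :=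
  Module.finrank (ZMod p) (TensorProduct ℤ (ZMod p) (Additive B))

/-- The annihilator of a subgroup `A' ≤ A` inside the character group `Hom(A, ℂˣ)`:
the subgroup of characters that are trivial on `A'`. -/
def ann {A : Type} [CommGroup A] (A' : Subgroup A) : Subgroup (A →* ℂˣ) where
  carrier := {χ | ∀ a ∈ A', χ a = 1}
  one_mem' := by intro a _; rfl
  mul_mem' := by
    intro χ ψ hχ hψ a ha
    simp [hχ a ha, hψ a ha]
  inv_mem' := by
    intro χ hχ a ha
    simp [hχ a ha]

/-!
Duality of finite abelian groups with respect to `ℂˣ` makes `B ↦ Ann(B)` an inclusion-reversing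
bijection from subgroups of `A` onto subgroups of `Â`, with `Â ⧸ Ann(B) ≅ B̂ ≅ B`. Substituting
`C = Ann(B)`, the condition `Ann(A') ⊄ Ann(B)` becomes `B ⊄ A'`, and since `F` is closed under
passing to subgroups, it holds for all `A' ∈ F` exactly when `B ∉ F`. So both minima run over the
same set of numbers.
-/

open CommGroup

instance IsSepClosed.hasEnoughRootsOfUnity_exponent (K : Type*) [Field K] [IsSepClosed K]
    [CharZero K] (G : Type*) [LeftCancelMonoid G] [Finite G] :
    HasEnoughRootsOfUnity K (Monoid.exponent G) :=
  have : NeZero (Monoid.exponent G : K) := ⟨by exact_mod_cast Monoid.exponent_ne_zero_of_finite⟩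
  inferInstance

theorem pRank_congr (p : ℕ) {B B' : Type} [CommGroup B] [CommGroup B'] (e : B ≃* B') :
    pRank p B = pRank p B' :=
  (LinearEquiv.baseChange ℤ (ZMod p) _ _ (MulEquiv.toAdditive e).toIntLinearEquiv).finrank_eq

section Annihilator

variable {A : Type} [CommGroup A]

theorem ker_domRestrictHom_eq_ann (B : Subgroup A) :
    (MonoidHom.domRestrictHom B ℂˣ).ker = ann B := by
  ext χ
  exact MonoidHom.domRestrict_eq_one_iff

variable [Finite A]

theorem ann_eq_subgroupOrderIsoSubgroupMonoidHom (B : Subgroup A) :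
    ann B = (subgroupOrderIsoSubgroupMonoidHom A ℂ B).ofDual := by
  ext χ
  rw [mem_subgroupOrderIsoSubgroupMonoidHom_iff]
  rfl

theorem ann_le_ann_iff {B B' : Subgroup A} : ann B ≤ ann B' ↔ B' ≤ B := by
  rw [ann_eq_subgroupOrderIsoSubgroupMonoidHom, ann_eq_subgroupOrderIsoSubgroupMonoidHom]
  exact (subgroupOrderIsoSubgroupMonoidHom A ℂ).le_iff_le

theorem ann_surjective : Function.Surjective (ann (A := A)) := fun C =>
  ⟨(subgroupOrderIsoSubgroupMonoidHom A ℂ).symm (OrderDual.toDual C), by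
    rw [ann_eq_subgroupOrderIsoSubgroupMonoidHom, OrderIso.apply_symm_apply,
      OrderDual.ofDual_toDual]⟩

theorem nonempty_quotient_ann_mulEquiv (B : Subgroup A) :
    Nonempty (((A →* ℂˣ) ⧸ ann B) ≃* B) := by
  rw [← ker_domRestrictHom_eq_ann]
  exact ⟨(QuotientGroup.quotientKerEquivOfSurjective _
    (MonoidHom.domRestrict_surjective ℂ B)).trans
    (monoidHom_mulEquiv_of_hasEnoughRootsOfUnity B ℂ).some⟩

theorem pRank_quotient_ann (p : ℕ) (B : Subgroup A) :
    pRank p ((A →* ℂˣ) ⧸ ann B) = pRank p B :=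
  pRank_congr p (nonempty_quotient_ann_mulEquiv B).some

end Annihilator

theorem min_rank_dual_quotient_eq_corank_general (p : ℕ)
    (A : Type) [CommGroup A] [Finite A]
    (F : Set (Subgroup A))
    (hF : ∀ B C : Subgroup A, B ≤ C → C ∈ F → B ∈ F) :
    sInf {n : ℕ | ∃ C : Subgroup (A →* ℂˣ),
        (∀ A' ∈ F, ¬ ann A' ≤ C) ∧ n = pRank p ((A →* ℂˣ) ⧸ C)} =
    sInf {n : ℕ | ∃ B : Subgroup A, B ∉ F ∧ n = pRank p B} := by
  congr 1
  ext n
  constructor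
  · rintro ⟨C, hC, rfl⟩
    obtain ⟨B, rfl⟩ := ann_surjective C
    exact ⟨B, fun hB => hC B hB le_rfl, pRank_quotient_ann p B⟩
  · rintro ⟨B, hB, rfl⟩
    refine ⟨ann B, fun A' hA' hle => hB (hF B A' (ann_le_ann_iff.mp hle) hA'), ?_⟩
    exact (pRank_quotient_ann p B).symm

/-- Let `p` be a prime, `A` a finite abelian `p`-group and `F` a proper family of
subgroups of `A` (closed under passing to subgroups, with `A ∉ F`).  Then the
minimum of `rk_p(Â/C)` over subgroups `C` of the character group `Â` such that
`Ann(A') ⊄ C` for all `A' ∈ F` equals the minimum of `rk_p(B)` over subgroups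
`B ≤ A` with `B ∉ F` (the `p`-corank of `F`). -/
theorem min_rank_dual_quotient_eq_corank (p : ℕ) (hp : p.Prime)
    (A : Type) [CommGroup A] [Finite A] (hA : IsPGroup p A)
    (F : Set (Subgroup A))
    (hF : ∀ B C : Subgroup A, B ≤ C → C ∈ F → B ∈ F)
    (hproper : (⊤ : Subgroup A) ∉ F) :
    sInf {n : ℕ | ∃ C : Subgroup (A →* ℂˣ),
        (∀ A' ∈ F, ¬ ann A' ≤ C) ∧ n = pRank p ((A →* ℂˣ) ⧸ C)} =
    sInf {n : ℕ | ∃ B : Subgroup A, B ∉ F ∧ n = pRank p B} :=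
  min_rank_dual_quotient_eq_corank_general p A F hF
end

section
/- Let k ≥ 1 be an integer and let F be a finite subgroup of the k-fold product Circle^k of the circle group. Then the quotient group (Circle^k)/F is isomorphic, as a group, to Circle^k. -/
/-!
Under `x ↦ (exp (2πi xⱼ))ⱼ : ℝᵏ → Circleᵏ` the quotient `Circleᵏ / F` becomes `ℝᵏ / L`, where `L`
is the preimage of `F`. It contains `ℤᵏ` and, since every element of `F` is killed by `|F|`, it lies
in `|F|⁻¹ ℤᵏ`; so `L` is a full lattice. A `ℤ`-basis of `L` is an `ℝ`-basis of `ℝᵏ`, and the same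
exponential map taken in the coordinates of that basis identifies `ℝᵏ / L` with `Circleᵏ`.
-/

open Real Module Set Function Submodule

theorem Submodule.discreteTopology_of_smul_mem {K E : Type*} [DivisionRing K] [AddCommGroup E]
    [Module K E] [TopologicalSpace E] [ContinuousConstSMul K E]
    {L M : Submodule ℤ E} [DiscreteTopology M] {c : K} (hc : c ≠ 0) (h : ∀ x ∈ L, c • x ∈ M) :
    DiscreteTopology L :=
  .of_continuous_injective (f := fun x : L => (⟨c • x, h x x.2⟩ : M)) (by fun_prop)
    fun _ _ hxy => Subtype.ext <| smul_right_injective E hc (congrArg Subtype.val hxy)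

namespace Module.Basis

section circleExpHom

variable {ι E : Type*} [AddCommGroup E] [Module ℝ E] (b : Basis ι ℝ E)

noncomputable def circleExpHom : Multiplicative E →* (ι → Circle) where
  toFun x i := Circle.exp (2 * π * b.repr x.toAdd i)
  map_one' := by ext; simp
  map_mul' x y := by ext i; simp [mul_add, Circle.exp_add]

@[simp]
theorem circleExpHom_apply (x : Multiplicative E) (i : ι) :
    b.circleExpHom x i = Circle.exp (2 * π * b.repr x.toAdd i) := rfl

theorem circleExpHom_eq_one_iff {x : E} :
    b.circleExpHom (.ofAdd x) = 1 ↔ x ∈ span ℤ (range b) := by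
  rw [b.mem_span_iff_repr_mem ℤ, funext_iff]
  refine forall_congr' fun i => ?_
  simp only [circleExpHom_apply, toAdd_ofAdd, Pi.one_apply, Circle.exp_eq_one, eq_intCast,
    mem_range]
  constructor
  · rintro ⟨n, hn⟩
    exact ⟨n, (mul_left_cancel₀ two_pi_pos.ne' (hn.trans (mul_comm _ _))).symm⟩
  · rintro ⟨n, hn⟩
    exact ⟨n, hn ▸ mul_comm _ _⟩

theorem circleExpHom_surjective [Finite ι] : Surjective b.circleExpHom := fun z =>
  ⟨.ofAdd (b.equivFun.symm fun i => Complex.arg (z i) / (2 * π)), funext fun i => by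
    simp [← b.equivFun_apply, mul_div_cancel₀ _ two_pi_pos.ne', Circle.exp_arg]⟩

variable (F : Subgroup (ι → Circle))

noncomputable def circleExpComap : Submodule ℤ E :=
  AddSubgroup.toIntSubmodule (Subgroup.toAddSubgroup' (F.comap b.circleExpHom))

theorem mem_circleExpComap {x : E} : x ∈ b.circleExpComap F ↔ b.circleExpHom (.ofAdd x) ∈ F :=
  Iff.rfl

theorem span_le_circleExpComap : span ℤ (range b) ≤ b.circleExpComap F := fun x hx => by
  rw [mem_circleExpComap, b.circleExpHom_eq_one_iff.mpr hx]
  exact F.one_mem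

theorem nsmul_mem_span_of_mem_circleExpComap [Finite F] {x : E} (hx : x ∈ b.circleExpComap F) :
    Nat.card F • x ∈ span ℤ (range b) := by
  rw [← b.circleExpHom_eq_one_iff, ofAdd_nsmul, map_pow]
  exact congrArg Subtype.val (pow_card_eq_one' (x := (⟨_, hx⟩ : F)))

end circleExpHom

section IsZLattice

variable {ι E : Type*} [Finite ι] [NormedAddCommGroup E] [NormedSpace ℝ E] (b : Basis ι ℝ E)
  (F : Subgroup (ι → Circle)) [Finite F]

instance : DiscreteTopology (b.circleExpComap F) :=
  discreteTopology_of_smul_mem (Nat.cast_ne_zero.mpr (Nat.card_pos (α := F)).ne')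
    fun x hx => (Nat.cast_smul_eq_nsmul ℝ (Nat.card F) x).symm ▸
      b.nsmul_mem_span_of_mem_circleExpComap F hx

instance : IsZLattice ℝ (b.circleExpComap F) where
  span_top := eq_top_iff.mpr <| b.span_eq.ge.trans <|
    span_mono <| subset_span.trans (b.span_le_circleExpComap F)

end IsZLattice

end Module.Basis

theorem MonoidHom.nonempty_mulEquiv_pi_circle_of_ker_eq_span {ι E G : Type*} [Finite ι]
    [AddCommGroup E] [Module ℝ E] [Group G] (ψ : Multiplicative E →* G) (hψ : Surjective ψ)
    (b : Basis ι ℝ E) (hker : ∀ x, ψ (.ofAdd x) = 1 ↔ x ∈ span ℤ (Set.range b)) :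
    Nonempty (G ≃* (ι → Circle)) := by
  have hker_eq : ψ.ker = b.circleExpHom.ker := by
    ext x
    exact (hker x.toAdd).trans b.circleExpHom_eq_one_iff.symm
  exact ⟨(QuotientGroup.quotientKerEquivOfSurjective ψ hψ).symm.trans <|
    (QuotientGroup.quotientMulEquivOfEq hker_eq).trans <|
      QuotientGroup.quotientKerEquivOfSurjective _ b.circleExpHom_surjective⟩

theorem torus_quotient_finite_subgroup_general (k : ℕ)
    (F : Subgroup (Fin k → Circle)) [Finite F] :
    Nonempty (((Fin k → Circle) ⧸ F) ≃* (Fin k → Circle)) := by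
  let e := Pi.basisFun ℝ (Fin k)
  let L := e.circleExpComap F
  obtain ⟨b, hb⟩ : ∃ b : Basis (Fin k) ℝ (Fin k → ℝ), span ℤ (range b) = L :=
    ⟨_, (IsZLattice.basis L).ofZLatticeBasis_span ℝ L⟩
  refine ((QuotientGroup.mk' F).comp e.circleExpHom).nonempty_mulEquiv_pi_circle_of_ker_eq_span
    ((QuotientGroup.mk'_surjective F).comp e.circleExpHom_surjective) b fun x => ?_
  rw [hb, MonoidHom.comp_apply, QuotientGroup.mk'_apply, QuotientGroup.eq_one_iff]
  exact (e.mem_circleExpComap F).symm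

/-- For `k ≥ 1` and a finite subgroup `F` of the `k`-fold product `Circle^k`
of the circle group, the quotient group `(Circle^k)/F` is isomorphic, as a
group, to `Circle^k`. -/
theorem torus_quotient_finite_subgroup (k : ℕ) (hk : 1 ≤ k)
    (F : Subgroup (Fin k → Circle)) [Finite F] :
    Nonempty (((Fin k → Circle) ⧸ F) ≃* (Fin k → Circle)) :=
  torus_quotient_finite_subgroup_general k F
end

section
/- Let G be a group, Σ ≤ G a subgroup, and Δ ≤ Σ a commutative subgroup that is self-centralizing in Σ, i.e. the centralizer of Δ in Σ equals Δ. Let C denote the centralizer of Δ in G (so Δ ≤ C). For every left Σ-set X, the map (C/Δ) × X^Δ → (G ×_Σ X)^Δ sending (cΔ, x) to [c, x] is well-defined and injective. If moreover { u ∈ G : u⁻¹Δu ⊆ Σ } = C·Σ, then this map is a bijection. -/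
/-! The whole argument rests on one computation in `G ×_Σ X`: `[g u, x] = [g, x]` iff `u ∈ Σ`
and `u` fixes `x`. Applied to `u = g⁻¹ δ g` it says that `[g, x]` is `Δ`-fixed iff every
`g⁻¹ δ g` lies in `Σ` and fixes `x`; for `g = c ∈ C` this is just `x ∈ X^Δ`. Hence `[c, x]` is
`Δ`-fixed, and every `Δ`-fixed `[c s, x]` equals `[c, s • x]` with `s • x ∈ X^Δ`, which gives
surjectivity once `{u : u⁻¹Δu ⊆ Σ} = C·Σ`. If `[a, x] = [b, y]` with `a, b ∈ C`, the element
`a⁻¹ b` lies in `Σ ∩ C = Δ`, so `aΔ = bΔ` and `x = y`. -/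

/-- The equivalence relation on `G × X` defining the induced `G`-set
`G ×_Σ X`: `(gσ, x) ∼ (g, σ·x)` for `σ ∈ Σ`. -/
def indSetoid (G : Type) [Group G] (S : Subgroup G) (X : Type) [MulAction S X] :
    Setoid (G × X) where
  r a b := ∃ σ : S, b.1 = a.1 * σ ∧ a.2 = σ • b.2
  iseqv := by
    constructor
    · intro a
      exact ⟨1, by simp, by simp⟩
    · rintro a b ⟨σ, h1, h2⟩
      exact ⟨σ⁻¹, by simp [h1, mul_assoc], by simp [h2]⟩
    · rintro a b c ⟨σ, h1, h2⟩ ⟨τ, h3, h4⟩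
      exact ⟨σ * τ, by simp [h3, h1, mul_assoc], by simp [h2, h4, mul_smul]⟩

/-- The induced `G`-set `G ×_Σ X`. -/
def IndSet (G : Type) [Group G] (S : Subgroup G) (X : Type) [MulAction S X] : Type :=
  Quotient (indSetoid G S X)

/-- The action of `g : G` on the induced set `G ×_Σ X`, by left multiplication
on the first coordinate. -/
def gAct (G : Type) [Group G] (S : Subgroup G) (X : Type) [MulAction S X] (g : G) :
    IndSet G S X → IndSet G S X :=
  Quotient.map (fun a => (g * a.1, a.2)) (by
    rintro a b ⟨σ, h1, h2⟩
    exact ⟨σ, by simp [h1, mul_assoc], h2⟩)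

namespace IndSet

variable {G : Type} [Group G] {S : Subgroup G} {X : Type} [MulAction S X]

def mk (g : G) (x : X) : IndSet G S X := Quotient.mk _ (g, x)

theorem mk_eq_mk_iff {g g' : G} {x x' : X} :
    (mk g x : IndSet G S X) = mk g' x' ↔ ∃ σ : S, g' = g * σ ∧ x = σ • x' :=
  Quotient.eq

theorem mk_surjective :
    Function.Surjective (fun p : G × X => (mk p.1 p.2 : IndSet G S X)) :=
  Quotient.mk_surjective

theorem gAct_mk (δ g : G) (x : X) : gAct G S X δ (mk g x) = mk (δ * g) x := rfl

theorem mk_mul_smul (g : G) (σ : S) (x : X) : (mk (g * σ) x : IndSet G S X) = mk g (σ • x) :=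
  (mk_eq_mk_iff.2 ⟨σ, rfl, rfl⟩).symm

theorem mk_mul_eq_mk_iff (g u : G) (x : X) :
    (mk (g * u) x : IndSet G S X) = mk g x ↔ ∃ hu : u ∈ S, (⟨u, hu⟩ : S) • x = x := by
  rw [eq_comm, mk_eq_mk_iff]
  constructor
  · rintro ⟨σ, hσ, hx⟩
    obtain rfl : u = σ := mul_left_cancel hσ
    exact ⟨σ.2, hx.symm⟩
  · rintro ⟨hu, hx⟩
    exact ⟨⟨u, hu⟩, rfl, hx.symm⟩

theorem gAct_mk_eq_self_iff (δ g : G) (x : X) :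
    gAct G S X δ (mk g x) = mk g x ↔ ∃ h : g⁻¹ * δ * g ∈ S, (⟨g⁻¹ * δ * g, h⟩ : S) • x = x := by
  rw [gAct_mk, show δ * g = g * (g⁻¹ * δ * g) by group, mk_mul_eq_mk_iff]

theorem gAct_mk_eq_self_iff_of_commute {δ c : G} (hδc : δ * c = c * δ) (hδ : δ ∈ S) (x : X) :
    gAct G S X δ (mk c x) = mk c x ↔ (⟨δ, hδ⟩ : S) • x = x := by
  have hconj : c⁻¹ * δ * c = δ := by rw [mul_assoc, hδc, inv_mul_cancel_left]
  rw [gAct_mk_eq_self_iff]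
  simp only [hconj]
  exact ⟨fun ⟨_, h⟩ => h, fun h => ⟨hδ, h⟩⟩

end IndSet

open IndSet

section FixedPoints

variable {G : Type} [Group G] {S D : Subgroup G} {X : Type} [MulAction S X]

local notation "C" => Subgroup.centralizer (D : Set G)

def inducedFixedPointsMap (hDS : D ≤ S) :
    (C ⧸ D.subgroupOf C) × {x : X // ∀ (δ : G) (hδ : δ ∈ D), (⟨δ, hDS hδ⟩ : S) • x = x} →
      {q : IndSet G S X // ∀ δ ∈ D, gAct G S X δ q = q} := fun p =>
  Quotient.liftOn' p.1
    (fun c => ⟨mk (c : G) p.2.1, fun δ hδ =>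
      (gAct_mk_eq_self_iff_of_commute (c.2 δ hδ) (hDS hδ) _).2 (p.2.2 δ hδ)⟩)
    (by
      intro a b hab
      have hd : (a : G)⁻¹ * (b : G) ∈ D :=
        Subgroup.mem_subgroupOf.mp (QuotientGroup.leftRel_apply.mp hab)
      refine Subtype.ext (Eq.symm ?_)
      show mk (b : G) p.2.1 = mk (a : G) p.2.1
      rw [show (b : G) = a * ((a : G)⁻¹ * (b : G)) by group]
      exact (mk_mul_eq_mk_iff _ _ _).2 ⟨hDS hd, p.2.2 _ hd⟩)

theorem inducedFixedPointsMap_mk (hDS : D ≤ S) (c : C)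
    (x : {x : X // ∀ (δ : G) (hδ : δ ∈ D), (⟨δ, hDS hδ⟩ : S) • x = x}) :
    (inducedFixedPointsMap hDS (QuotientGroup.mk c, x)).1 =
      Quotient.mk (indSetoid G S X) ((c : G), x.1) :=
  rfl

theorem inducedFixedPointsMap_injective (hDS : D ≤ S) (hself : S ⊓ C = D) :
    Function.Injective (inducedFixedPointsMap (X := X) hDS) := by
  rintro ⟨p, x⟩ ⟨q, y⟩ hxy
  induction p using QuotientGroup.induction_on with | H a =>
  induction q using QuotientGroup.induction_on with | H b =>
  obtain ⟨σ, hb, hx⟩ := mk_eq_mk_iff.1 (congrArg Subtype.val hxy)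
  have hσ : (σ : G) = (a : G)⁻¹ * (b : G) := by rw [hb, inv_mul_cancel_left]
  have hσD : (σ : G) ∈ D := hself ▸ ⟨σ.2, hσ ▸ Subgroup.mul_mem _ (Subgroup.inv_mem _ a.2) b.2⟩
  refine Prod.ext ?_ (Subtype.ext ?_)
  · exact QuotientGroup.eq.2 (Subgroup.mem_subgroupOf.2 (by simpa [← hσ] using hσD))
  · exact hx.trans (y.2 σ hσD)

theorem inducedFixedPointsMap_surjective (hDS : D ≤ S)
    (hU : {u : G | ∀ δ ∈ D, u⁻¹ * δ * u ∈ S} = {u : G | ∃ c ∈ C, ∃ σ ∈ S, u = c * σ}) :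
    Function.Surjective (inducedFixedPointsMap (X := X) hDS) := by
  rintro ⟨q, hq⟩
  obtain ⟨⟨g, x⟩, rfl⟩ := mk_surjective q
  dsimp only at hq
  have hg : g ∈ {u : G | ∀ δ ∈ D, u⁻¹ * δ * u ∈ S} := fun δ hδ =>
    ((gAct_mk_eq_self_iff δ g x).1 (hq δ hδ)).1
  rw [hU] at hg
  obtain ⟨c, hc, s, hs, rfl⟩ := hg
  have hcs : (mk (c * s) x : IndSet G S X) = mk c ((⟨s, hs⟩ : S) • x) := mk_mul_smul c ⟨s, hs⟩ x
  rw [hcs] at hq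
  refine ⟨(QuotientGroup.mk ⟨c, hc⟩, ⟨_, fun δ hδ =>
    (gAct_mk_eq_self_iff_of_commute (hc δ hδ) (hDS hδ) _).1 (hq δ hδ)⟩), ?_⟩
  exact Subtype.ext hcs.symm

end FixedPoints

theorem inducedSet_fixedPoints_of_selfCentralizing_general (G : Type) [Group G]
    (S D : Subgroup G) (hDS : D ≤ S)
    (hself : S ⊓ Subgroup.centralizer (D : Set G) = D)
    (X : Type) [MulAction S X] :
    ∃ F : ((Subgroup.centralizer (D : Set G)) ⧸
            D.subgroupOf (Subgroup.centralizer (D : Set G))) ×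
          {x : X // ∀ (δ : G) (hδ : δ ∈ D), (⟨δ, hDS hδ⟩ : S) • x = x} →
        {q : IndSet G S X // ∀ δ ∈ D, gAct G S X δ q = q},
      (∀ (c : Subgroup.centralizer (D : Set G))
          (x : {x : X // ∀ (δ : G) (hδ : δ ∈ D), (⟨δ, hDS hδ⟩ : S) • x = x}),
          (F (QuotientGroup.mk c, x)).1 =
            Quotient.mk (indSetoid G S X) ((c : G), x.1)) ∧
      Function.Injective F ∧
      ({u : G | ∀ δ ∈ D, u⁻¹ * δ * u ∈ S} =
          {u : G | ∃ c ∈ Subgroup.centralizer (D : Set G), ∃ σ ∈ S, u = c * σ} →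
        Function.Bijective F) :=
  ⟨inducedFixedPointsMap hDS, inducedFixedPointsMap_mk hDS,
    inducedFixedPointsMap_injective hDS hself,
    fun hU => ⟨inducedFixedPointsMap_injective hDS hself,
      inducedFixedPointsMap_surjective hDS hU⟩⟩

/-- Let `Δ ≤ Σ ≤ G` with `Δ` commutative and self-centralizing in `Σ`, and let
`C` be the centralizer of `Δ` in `G`.  For every `Σ`-set `X`, the map
`(C/Δ) × X^Δ → (G ×_Σ X)^Δ`, `(cΔ, x) ↦ [c, x]`, is well-defined and
injective; if moreover `{u ∈ G : u⁻¹Δu ⊆ Σ} = C·Σ`, it is a bijection. -/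
theorem inducedSet_fixedPoints_of_selfCentralizing (G : Type) [Group G]
    (S D : Subgroup G) (hDS : D ≤ S)
    (hcomm : ∀ a ∈ D, ∀ b ∈ D, a * b = b * a)
    (hself : S ⊓ Subgroup.centralizer (D : Set G) = D)
    (X : Type) [MulAction S X] :
    ∃ F : ((Subgroup.centralizer (D : Set G)) ⧸
            D.subgroupOf (Subgroup.centralizer (D : Set G))) ×
          {x : X // ∀ (δ : G) (hδ : δ ∈ D), (⟨δ, hDS hδ⟩ : S) • x = x} →
        {q : IndSet G S X // ∀ δ ∈ D, gAct G S X δ q = q},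
      (∀ (c : Subgroup.centralizer (D : Set G))
          (x : {x : X // ∀ (δ : G) (hδ : δ ∈ D), (⟨δ, hDS hδ⟩ : S) • x = x}),
          (F (QuotientGroup.mk c, x)).1 =
            Quotient.mk (indSetoid G S X) ((c : G), x.1)) ∧
      Function.Injective F ∧
      ({u : G | ∀ δ ∈ D, u⁻¹ * δ * u ∈ S} =
          {u : G | ∃ c ∈ Subgroup.centralizer (D : Set G), ∃ σ ∈ S, u = c * σ} →
        Function.Bijective F) :=
  inducedSet_fixedPoints_of_selfCentralizing_general G S D hDS hself X
end
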